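/- arXiv:math/9910096 — 4 statements merged into one kernel-verified Lean document; each statement's English description precedes it below -/
import Mathlib

section
/- For every natural number n ≥ 1, sum over even k in {0,...,2n} of C(2n,k)_q * q^(n(2n-k) + k(k-1)/2) equals the sum over odd k in {0,...,2n} of C(2n,k)_q * q^(n(2n-k) + k(k-1)/2), as polynomials in q. -/
noncomputable section

/-- The Gaussian binomial coefficient as a polynomial in `q` (Pascal recursion). -/
def gauss : ℕ → ℕ → Polynomial ℤ
  | _, 0 => 1
  | 0, _ + 1 => 0
  | n + 1, k + 1 => gauss n k + Polynomial.X ^ (k + 1) * gauss n (k + 1)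

/-!
Let `P_m(x) = ∑ₖ (-1)^k q^(k choose 2) [m, k]_q x^(m-k)` (`gaussAltSum`), which is
`∏_{i<m} (x - q^i)` by the `q`-binomial theorem. The Pascal rule gives `P_{m+1}(1) = 0` and
`P_{m+1}(q y) = (q y - 1) q^m P_m(y)`, so `P_m(q^c) = 0` for `c < m`. Taking `m = 2n`, `c = n`
and splitting the sum by the parity of `k` gives the identity.
-/

open Polynomial Finset

lemma gauss_zero_right (m : ℕ) : gauss m 0 = 1 := by
  cases m <;> rfl

lemma gauss_succ_succ (m k : ℕ) :
    gauss (m + 1) (k + 1) = gauss m k + X ^ (k + 1) * gauss m (k + 1) :=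
  rfl

lemma gauss_eq_zero_of_lt {m k : ℕ} (h : m < k) : gauss m k = 0 := by
  induction m generalizing k with
  | zero => obtain ⟨j, rfl⟩ := Nat.exists_eq_add_one.mpr h; rfl
  | succ m ih =>
    obtain ⟨j, rfl⟩ := Nat.exists_eq_add_one.mpr (Nat.zero_lt_of_lt h)
    rw [gauss_succ_succ, ih (by omega), ih (by omega), mul_zero, add_zero]

lemma choose_two_succ (k : ℕ) : (k + 1).choose 2 = k.choose 2 + k := by
  rw [Nat.choose_two_right, Nat.choose_two_right, Nat.triangle_succ]

def gaussAltSum (m : ℕ) (x : ℤ[X]) : ℤ[X] :=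
  ∑ k ∈ range (m + 1), (-1) ^ k * X ^ k.choose 2 * gauss m k * x ^ (m - k)

lemma gaussAltSum_succ (m : ℕ) (x : ℤ[X]) :
    gaussAltSum (m + 1) x =
      (x - 1) * ∑ k ∈ range (m + 1), (-1) ^ k * X ^ (k + 1).choose 2 * gauss m k * x ^ (m - k) := by
  set S := ∑ k ∈ range (m + 1), (-1) ^ k * X ^ (k + 1).choose 2 * gauss m k * x ^ (m - k)
  set T := ∑ k ∈ range (m + 1),
    (-1) ^ (k + 1) * X ^ (k + 2).choose 2 * gauss m (k + 1) * x ^ (m - k)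
  have hS : x * S = T + x ^ (m + 1) := by
    simp only [T]
    rw [Finset.mul_sum, sum_range_succ', sum_range_succ _ m, gauss_eq_zero_of_lt (lt_add_one m)]
    simp only [mul_zero, zero_mul, add_zero, pow_zero, one_mul, gauss_zero_right, Nat.sub_zero]
    congr 1
    · refine Finset.sum_congr rfl fun k hk => ?_
      rw [show m - k = m - (k + 1) + 1 by have := mem_range.mp hk; omega]
      ring
    · simp [pow_succ']
  have hpascal : gaussAltSum (m + 1) x = -S + T + x ^ (m + 1) := by
    rw [gaussAltSum, sum_range_succ']
    simp only [gauss_succ_succ, S, T]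
    rw [← sum_neg_distrib, ← sum_add_distrib]
    congr 1
    · refine Finset.sum_congr rfl fun k _ => ?_
      rw [Nat.add_sub_add_right, choose_two_succ (k + 1), pow_add]
      ring
    · simp [gauss_zero_right]
  rw [hpascal, sub_mul, hS, one_mul]
  ring

lemma gaussAltSum_succ_X_mul (m : ℕ) (y : ℤ[X]) :
    gaussAltSum (m + 1) (X * y) = (X * y - 1) * X ^ m * gaussAltSum m y := by
  rw [gaussAltSum_succ, mul_assoc]
  congr 1
  rw [gaussAltSum, Finset.mul_sum]
  refine Finset.sum_congr rfl fun k hk => ?_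
  have hkm : k ≤ m := Nat.lt_succ_iff.mp (mem_range.mp hk)
  have hexp : (k + 1).choose 2 + (m - k) = m + k.choose 2 := by
    rw [choose_two_succ]; omega
  calc (-1 : ℤ[X]) ^ k * X ^ (k + 1).choose 2 * gauss m k * (X * y) ^ (m - k)
      = (-1) ^ k * X ^ ((k + 1).choose 2 + (m - k)) * gauss m k * y ^ (m - k) := by ring
    _ = X ^ m * ((-1) ^ k * X ^ k.choose 2 * gauss m k * y ^ (m - k)) := by rw [hexp]; ring

lemma gaussAltSum_X_pow_eq_zero {m c : ℕ} (h : c < m) : gaussAltSum m (X ^ c) = 0 := by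
  induction m generalizing c with
  | zero => omega
  | succ m ih =>
    cases c with
    | zero => rw [gaussAltSum_succ, pow_zero, sub_self, zero_mul]
    | succ c => rw [pow_succ', gaussAltSum_succ_X_mul, ih (by omega), mul_zero]

lemma sum_neg_one_pow_mul_eq_even_sub_odd {R : Type*} [CommRing R] (s : Finset ℕ) (f : ℕ → R) :
    ∑ k ∈ s, (-1) ^ k * f k = ∑ k ∈ s.filter Even, f k - ∑ k ∈ s.filter Odd, f k := by
  rw [← sum_filter_add_sum_filter_not s Even, sub_eq_add_neg, ← sum_neg_distrib]
  congr 1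
  · exact sum_congr rfl fun k hk => by rw [(mem_filter.mp hk).2.neg_one_pow, one_mul]
  · simp only [Nat.not_even_iff_odd]
    exact sum_congr rfl fun k hk => by rw [(mem_filter.mp hk).2.neg_one_pow, neg_one_mul]

theorem even_odd_gauss_sum_eq (n : ℕ) (hn : 1 ≤ n) :
    ∑ k ∈ (Finset.range (2 * n + 1)).filter (fun k => Even k),
        gauss (2 * n) k * Polynomial.X ^ (n * (2 * n - k) + k * (k - 1) / 2) =
    ∑ k ∈ (Finset.range (2 * n + 1)).filter (fun k => Odd k),
        gauss (2 * n) k * Polynomial.X ^ (n * (2 * n - k) + k * (k - 1) / 2) := by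
  have hzero := gaussAltSum_X_pow_eq_zero (m := 2 * n) (c := n) (by omega)
  have hterm : ∀ k, (-1 : ℤ[X]) ^ k * X ^ k.choose 2 * gauss (2 * n) k * (X ^ n) ^ (2 * n - k) =
      (-1) ^ k * (gauss (2 * n) k * X ^ (n * (2 * n - k) + k * (k - 1) / 2)) := fun k => by
    rw [Nat.choose_two_right, pow_add, pow_mul]; ring
  simp only [gaussAltSum, hterm, sum_neg_one_pow_mul_eq_even_sub_odd] at hzero
  exact sub_eq_zero.mp hzero
end
end

section
/- Define formal power series sin_q(z) = sum_{n≥0} (-1)^n q^(n^2) z^(2n+1)/[2n+1]_q! and cos_q(z) = sum_{n≥0} (-1)^n q^(n^2) z^(2n)/[2n]_q!, with coefficients in the field of rational functions Q(q). Then sin_q(z)·sin_{1/q}(z) + cos_q(z)·cos_{1/q}(z) = 1, where sin_{1/q}, cos_{1/q} are obtained by substituting 1/q for q. -/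
noncomputable section
open Finset PowerSeries

abbrev Fq : Type := RatFunc ℚ

/-- The variable `q` as element of the field of rational functions `ℚ(q)`. -/
def qv : Fq := RatFunc.X

/-- The q-integer `[m]_q = 1 + q + ... + q^(m-1)`. -/
def qInt (x : Fq) (m : ℕ) : Fq := ∑ i ∈ Finset.range m, x ^ i

/-- The q-factorial `[m]_q! = [1]_q [2]_q ⋯ [m]_q`. -/
def qFact (x : Fq) (m : ℕ) : Fq := ∏ i ∈ Finset.range m, qInt x (i + 1)

/-- `sin_q(z) = ∑ (-1)^n q^(n^2) z^(2n+1)/[2n+1]_q!`. -/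
def qsin (x : Fq) : PowerSeries Fq :=
  PowerSeries.mk fun m =>
    if m % 2 = 1 then (-1 : Fq) ^ (m / 2) * x ^ ((m / 2) ^ 2) / qFact x m else 0

/-- `cos_q(z) = ∑ (-1)^n q^(n^2) z^(2n)/[2n]_q!`. -/
def qcos (x : Fq) : PowerSeries Fq :=
  PowerSeries.mk fun m =>
    if m % 2 = 0 then (-1 : Fq) ^ (m / 2) * x ^ ((m / 2) ^ 2) / qFact x m else 0

/-!
Write `f - f(qz) = (1 - q) z D_q f` for the q-derivative `D_q`. Then `D_q sin_q = cos_q` and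
`D_q cos_q (z) = -sin_q (qz)`; read in base `q`, the `1/q` versions satisfy
`D_q sin_{1/q} (z) = cos_{1/q} (qz)` and `D_q cos_{1/q} = -sin_{1/q}`. By the q-Leibniz rule
`fg - f(qz)g(qz) = f(qz)(g - g(qz)) + g(f - f(qz))` the left-hand side `F` satisfies
`F(z) = F(qz)`, which forces `F` to be constant because `q` is not a root of unity; its constant
term is `1`.
-/

theorem not_isOfFinOrder_inv {G₀ : Type*} [GroupWithZero G₀] {x : G₀} (hx : ¬IsOfFinOrder x) :
    ¬IsOfFinOrder x⁻¹ := by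
  simpa only [isOfFinOrder_iff_pow_eq_one, inv_pow, inv_eq_one] using hx

theorem eq_C_of_sub_rescale_eq_zero {R : Type*} [CommRing R] [IsDomain R] {x : R}
    (hx : ¬IsOfFinOrder x) {f : R⟦X⟧} (hf : f - rescale x f = 0) :
    f = C (constantCoeff f) := by
  ext (_ | m)
  · simp
  · have hm := congrArg (coeff (m + 1)) hf
    rw [map_sub, coeff_rescale, ← one_sub_mul, map_zero] at hm
    have hxm : 1 - x ^ (m + 1) ≠ 0 :=
      sub_ne_zero.mpr fun h ↦ hx (isOfFinOrder_iff_pow_eq_one.mpr ⟨m + 1, m.succ_pos, h.symm⟩)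
    simpa [coeff_C] using (mul_eq_zero.mp hm).resolve_left hxm

theorem sub_rescale_of_sub_rescale_inv {K : Type*} [Field K] {x : K} (hx : x ≠ 0) {f g : K⟦X⟧}
    (h : f - rescale x⁻¹ f = C (1 - x⁻¹) * X * g) :
    f - rescale x f = C (1 - x) * X * rescale x g := by
  have h' := congrArg (rescale x) h
  have hC (c : K) : rescale x (C c) = C c := by
    ext (_ | m) <;> simp [coeff_C]
  have hcoef : C (1 - x) = -(C (1 - x⁻¹) * C x) := by
    rw [← map_mul, ← map_neg, sub_mul, inv_mul_cancel₀ hx, one_mul, neg_sub]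
  rw [map_sub, map_mul, map_mul, rescale_X, rescale_rescale, inv_mul_cancel₀ hx, rescale_one,
    RingHom.id_apply, hC] at h'
  rw [hcoef]
  linear_combination -h'

theorem qInt_succ_ne_zero {x : Fq} (hx : ¬IsOfFinOrder x) (m : ℕ) : qInt x (m + 1) ≠ 0 := by
  intro h
  have := geom_sum_mul_neg x (m + 1)
  rw [← qInt, h, zero_mul, eq_comm, sub_eq_zero] at this
  exact hx (isOfFinOrder_iff_pow_eq_one.mpr ⟨m + 1, m.succ_pos, this.symm⟩)

theorem qFact_succ (x : Fq) (m : ℕ) : qFact x (m + 1) = qFact x m * qInt x (m + 1) :=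
  prod_range_succ _ _

theorem one_sub_pow_div_qFact_succ {x : Fq} {m : ℕ} (hm : qInt x (m + 1) ≠ 0) :
    (1 - x ^ (m + 1)) / qFact x (m + 1) = (1 - x) / qFact x m := by
  rw [← geom_sum_mul_neg, ← qInt, qFact_succ, mul_comm (qInt x _), mul_div_mul_right _ _ hm]

section Coefficients

variable (x : Fq) (n : ℕ)

@[simp] theorem coeff_qsin_two_mul : coeff (2 * n) (qsin x) = 0 := by
  simp [qsin]

@[simp] theorem coeff_qsin_two_mul_add_one :
    coeff (2 * n + 1) (qsin x) = (-1) ^ n * x ^ (n ^ 2) / qFact x (2 * n + 1) := by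
  simp [qsin, show (2 * n + 1) / 2 = n by omega]

@[simp] theorem coeff_qcos_two_mul :
    coeff (2 * n) (qcos x) = (-1) ^ n * x ^ (n ^ 2) / qFact x (2 * n) := by
  simp [qcos]

@[simp] theorem coeff_qcos_two_mul_add_one : coeff (2 * n + 1) (qcos x) = 0 := by
  simp [qcos]

@[simp] theorem constantCoeff_qsin : constantCoeff (qsin x) = 0 := by
  simpa using coeff_qsin_two_mul x 0

@[simp] theorem constantCoeff_qcos : constantCoeff (qcos x) = 1 := by
  simpa [qFact] using coeff_qcos_two_mul x 0

end Coefficients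

theorem qsin_sub_rescale {x : Fq} (hx : ∀ m, qInt x (m + 1) ≠ 0) :
    qsin x - rescale x (qsin x) = C (1 - x) * X * qcos x := by
  ext (_ | m) <;> rw [map_sub, coeff_rescale, ← one_sub_mul, mul_assoc, coeff_C_mul]
  · rw [pow_zero, sub_self, zero_mul, coeff_zero_X_mul, mul_zero]
  rw [coeff_succ_X_mul]
  obtain ⟨n, rfl | rfl⟩ := m.even_or_odd'
  · rw [coeff_qsin_two_mul_add_one, coeff_qcos_two_mul, mul_div_left_comm,
      mul_div_left_comm (1 - x), one_sub_pow_div_qFact_succ (hx _)]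
  · simp [show 2 * n + 1 + 1 = 2 * (n + 1) by ring]

theorem qcos_sub_rescale {x : Fq} (hx : ∀ m, qInt x (m + 1) ≠ 0) :
    qcos x - rescale x (qcos x) = -(C (1 - x) * X * rescale x (qsin x)) := by
  ext (_ | m) <;> rw [map_sub, coeff_rescale, ← one_sub_mul, map_neg, mul_assoc, coeff_C_mul]
  · rw [pow_zero, sub_self, zero_mul, coeff_zero_X_mul, mul_zero, neg_zero]
  rw [coeff_succ_X_mul, coeff_rescale]
  obtain ⟨n, rfl | rfl⟩ := m.even_or_odd'
  · simp
  · rw [show 2 * n + 1 + 1 = 2 * (n + 1) by ring, coeff_qcos_two_mul, coeff_qsin_two_mul_add_one,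
      show 2 * (n + 1) = 2 * n + 1 + 1 by ring, mul_div_left_comm, one_sub_pow_div_qFact_succ (hx _)]
    ring

theorem qsin_mul_qsin_inv_add_qcos_mul_qcos_inv {x : Fq} (hx₀ : x ≠ 0) (hx : ¬IsOfFinOrder x) :
    qsin x * qsin x⁻¹ + qcos x * qcos x⁻¹ = 1 := by
  have hq := qInt_succ_ne_zero hx
  have hq' := qInt_succ_ne_zero (not_isOfFinOrder_inv hx)
  have hsin := qsin_sub_rescale hq
  have hcos := qcos_sub_rescale hq
  have hsin' := sub_rescale_of_sub_rescale_inv hx₀ (qsin_sub_rescale hq')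
  have hcos' : qcos x⁻¹ - rescale x (qcos x⁻¹) = -(C (1 - x) * X * qsin x⁻¹) := by
    have h := sub_rescale_of_sub_rescale_inv hx₀ (g := -rescale x⁻¹ (qsin x⁻¹))
      (by rw [qcos_sub_rescale hq', mul_neg])
    rwa [map_neg, rescale_rescale, inv_mul_cancel₀ hx₀, rescale_one, mul_neg] at h
  have hconst : qsin x * qsin x⁻¹ + qcos x * qcos x⁻¹
      - rescale x (qsin x * qsin x⁻¹ + qcos x * qcos x⁻¹) = 0 := by
    rw [map_add, map_mul, map_mul]
    linear_combination rescale x (qsin x) * hsin' + qsin x⁻¹ * hsin + qcos x * hcos'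
      + rescale x (qcos x⁻¹) * hcos
  rw [eq_C_of_sub_rescale_eq_zero hx hconst]
  simp

theorem not_isOfFinOrder_qv : ¬IsOfFinOrder qv := by
  rw [isOfFinOrder_iff_pow_eq_one]
  rintro ⟨n, hn, h⟩
  have hX : (Polynomial.X ^ n : Polynomial ℚ) = 1 :=
    IsFractionRing.injective (Polynomial ℚ) Fq (by simpa [qv, RatFunc.algebraMap_X] using h)
  simpa [hn.ne'] using congrArg Polynomial.natDegree hX

theorem q_sine_cosine_pair_1010 :
    qsin qv * qsin qv⁻¹ + qcos qv * qcos qv⁻¹ = 1 :=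
  qsin_mul_qsin_inv_add_qcos_mul_qcos_inv RatFunc.X_ne_zero not_isOfFinOrder_qv
end
end

section
/- For every natural number n, sum_{k=0}^{n} (-1)^k q^(k(k-1)/2) / ((q;q)_k (q^2;q^2)_{n-k}) = (-1)^n q^(n^2) / (q^2;q^2)_n, as an identity of rational functions in q. -/
noncomputable section
open Finset PowerSeries

/-- The q-Pochhammer symbol `(x;r)_m = (1-x)(1-xr)⋯(1-xr^(m-1))`. -/
def qPoch (x r : Fq) (m : ℕ) : Fq := ∏ j ∈ Finset.range m, (1 - x * r ^ j)

/-!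
Multiplied by `(q²;q²)_n`, the `k`-th summand becomes `[n k]_q ∏_{i<k} (-qⁿ - qⁱ)`: split
`(q²;q²)_m = (q;q)_m (-q;q)_m`, cancel the Gaussian binomial coefficient `[n k]_q` out of
`(q;q)_n / ((q;q)_k (q;q)_{n-k})`, and absorb `(-1)^k q^(k(k-1)/2)` into the top `k` factors of
`(-q;q)_n`. The resulting sum is the q-Newton interpolation formula
`yⁿ = ∑_k [n k]_q ∏_{i<k} (y - qⁱ)` at `y = -qⁿ`.
-/

section GaussianBinomial

variable {R : Type*} [CommRing R]

def qBinom (q : R) : ℕ → ℕ → R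
  | _, 0 => 1
  | 0, _ + 1 => 0
  | n + 1, k + 1 => qBinom q n k + q ^ (k + 1) * qBinom q n (k + 1)

@[simp]
theorem qBinom_zero_right (q : R) (n : ℕ) : qBinom q n 0 = 1 := by
  cases n <;> rfl

theorem qBinom_succ_succ (q : R) (n k : ℕ) :
    qBinom q (n + 1) (k + 1) = qBinom q n k + q ^ (k + 1) * qBinom q n (k + 1) :=
  rfl

theorem qBinom_eq_zero_of_lt (q : R) : ∀ {n k : ℕ}, n < k → qBinom q n k = 0
  | 0, _ + 1, _ => rfl
  | n + 1, k + 1, h => by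
    rw [qBinom_succ_succ, qBinom_eq_zero_of_lt q (by omega), qBinom_eq_zero_of_lt q (by omega)]
    ring

@[simp]
theorem qBinom_self (q : R) : ∀ n : ℕ, qBinom q n n = 1
  | 0 => rfl
  | n + 1 => by
    rw [qBinom_succ_succ, qBinom_self q n, qBinom_eq_zero_of_lt q (Nat.lt_succ_self n)]
    ring

theorem sum_qBinom_mul_prod_sub_pow (q y : R) (n : ℕ) :
    ∑ k ∈ range (n + 1), qBinom q n k * ∏ i ∈ range k, (y - q ^ i) = y ^ n := by
  induction n with
  | zero => simp
  | succ n ih =>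
    calc ∑ k ∈ range (n + 2), qBinom q (n + 1) k * ∏ i ∈ range k, (y - q ^ i)
        = ∑ k ∈ range (n + 1), qBinom q (n + 1) (k + 1) * ∏ i ∈ range (k + 1), (y - q ^ i)
            + 1 := by
          rw [sum_range_succ', qBinom_zero_right, prod_range_zero, mul_one]
      _ = ∑ k ∈ range (n + 1), qBinom q n k * ∏ i ∈ range (k + 1), (y - q ^ i)
            + ∑ k ∈ range (n + 2), q ^ k * qBinom q n k * ∏ i ∈ range k, (y - q ^ i) := by
          rw [sum_range_succ' _ (n + 1)]
          simp only [qBinom_succ_succ, add_mul, sum_add_distrib, pow_zero, qBinom_zero_right,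
            prod_range_zero, mul_one]
          ring
      _ = ∑ k ∈ range (n + 1), qBinom q n k * ∏ i ∈ range (k + 1), (y - q ^ i)
            + ∑ k ∈ range (n + 1), q ^ k * qBinom q n k * ∏ i ∈ range k, (y - q ^ i) := by
          rw [sum_range_succ _ (n + 1), qBinom_eq_zero_of_lt q (Nat.lt_succ_self n)]
          simp
      _ = y * ∑ k ∈ range (n + 1), qBinom q n k * ∏ i ∈ range k, (y - q ^ i) := by
          rw [mul_sum, ← sum_add_distrib]
          refine sum_congr rfl fun k _ => ?_
          rw [prod_range_succ]
          ring
      _ = y ^ (n + 1) := by rw [ih, pow_succ']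

theorem prod_neg_pow_sub_pow (q : R) {n k : ℕ} (hk : k ≤ n) :
    ∏ i ∈ range k, (-q ^ n - q ^ i) =
      (-1) ^ k * q ^ (k * (k - 1) / 2) * ∏ i ∈ range k, (1 - -q * q ^ (n - 1 - i)) := by
  have hfactor : ∀ i ∈ range k, -q ^ n - q ^ i = -1 * q ^ i * (1 - -q * q ^ (n - 1 - i)) := by
    intro i hi
    have hn : q ^ n = q * q ^ i * q ^ (n - 1 - i) := by
      rw [← pow_succ', ← pow_add]
      congr 1
      have := mem_range.mp hi
      omega
    rw [hn]
    ring
  rw [prod_congr rfl hfactor, prod_mul_distrib, prod_mul_distrib, prod_const, card_range,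
    prod_pow_eq_pow_sum, sum_range_id]

end GaussianBinomial

@[simp]
theorem qPoch_zero (x r : Fq) : qPoch x r 0 = 1 :=
  prod_range_zero _

theorem qPoch_succ (x r : Fq) (m : ℕ) : qPoch x r (m + 1) = qPoch x r m * (1 - x * r ^ m) :=
  prod_range_succ _ _

theorem qPoch_sq_sq (q : Fq) (m : ℕ) : qPoch (q ^ 2) (q ^ 2) m = qPoch q q m * qPoch (-q) q m := by
  simp only [qPoch, ← prod_mul_distrib]
  exact prod_congr rfl fun j _ => by ring

theorem qPoch_eq_mul_prod_top (x r : Fq) {n k : ℕ} (hk : k ≤ n) :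
    qPoch x r n = qPoch x r (n - k) * ∏ i ∈ range k, (1 - x * r ^ (n - 1 - i)) := by
  obtain ⟨m, rfl⟩ := Nat.exists_eq_add_of_le' hk
  rw [qPoch, prod_range_add, ← qPoch, Nat.add_sub_cancel, ← prod_range_reflect]
  congr 1
  refine prod_congr rfl fun i hi => ?_
  have := mem_range.mp hi
  congr 3
  omega

theorem qBinom_mul_qPoch (q : Fq) {n k : ℕ} (hk : k ≤ n) :
    qBinom q n k * (qPoch q q k * qPoch q q (n - k)) = qPoch q q n := by
  induction n generalizing k with
  | zero =>
    obtain rfl : k = 0 := by omega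
    simp
  | succ n ih =>
    cases k with
    | zero => simp
    | succ k =>
      obtain rfl | hlt := eq_or_lt_of_le (Nat.le_of_succ_le_succ hk)
      · simp
      obtain ⟨m, rfl⟩ := Nat.exists_eq_add_of_lt hlt
      have hlow := ih (k := k) (by omega)
      have hhigh := ih (k := k + 1) (by omega)
      rw [show k + m + 1 - k = m + 1 by omega, qPoch_succ q q m] at hlow
      rw [show k + m + 1 - (k + 1) = m by omega, qPoch_succ q q k] at hhigh
      rw [show k + m + 1 + 1 - (k + 1) = m + 1 by omega, qBinom_succ_succ, qPoch_succ q q k,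
        qPoch_succ q q m, qPoch_succ q q (k + m + 1)]
      linear_combination (1 - q * q ^ k) * hlow + q ^ (k + 1) * (1 - q * q ^ m) * hhigh

theorem euler_type_summand_eq (q : Fq) {n k : ℕ} (hk : k ≤ n)
    (hk0 : qPoch q q k * qPoch (q ^ 2) (q ^ 2) (n - k) ≠ 0) (hn0 : qPoch (q ^ 2) (q ^ 2) n ≠ 0) :
    (-1 : Fq) ^ k * q ^ (k * (k - 1) / 2) / (qPoch q q k * qPoch (q ^ 2) (q ^ 2) (n - k)) =
      (qBinom q n k * ∏ i ∈ range k, (-q ^ n - q ^ i)) / qPoch (q ^ 2) (q ^ 2) n := by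
  rw [div_eq_div_iff hk0 hn0, prod_neg_pow_sub_pow q hk, qPoch_sq_sq q n, qPoch_sq_sq q (n - k),
    qPoch_eq_mul_prod_top (-q) q hk, ← qBinom_mul_qPoch q hk]
  ring

theorem qv_pow_ne_one {t : ℕ} (ht : t ≠ 0) : qv ^ t ≠ 1 := by
  intro h
  have hdeg := congrArg RatFunc.intDegree h
  rw [qv, ← RatFunc.algebraMap_X, ← map_pow, RatFunc.intDegree_polynomial,
    Polynomial.natDegree_X_pow, RatFunc.intDegree_one] at hdeg
  exact ht (by exact_mod_cast hdeg)

theorem qPoch_qv_pow_ne_zero {a : ℕ} (ha : a ≠ 0) (m : ℕ) : qPoch (qv ^ a) (qv ^ a) m ≠ 0 := by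
  refine prod_ne_zero_iff.mpr fun j _ => ?_
  rw [sub_ne_zero, ← pow_succ', ← pow_mul]
  exact (qv_pow_ne_one (mul_ne_zero ha j.succ_ne_zero)).symm

theorem euler_type_sum (n : ℕ) :
    ∑ k ∈ Finset.range (n + 1),
      (-1 : Fq) ^ k * qv ^ (k * (k - 1) / 2) /
        (qPoch qv qv k * qPoch (qv ^ 2) (qv ^ 2) (n - k)) =
    (-1 : Fq) ^ n * qv ^ (n ^ 2) / qPoch (qv ^ 2) (qv ^ 2) n := by
  have hqv (m : ℕ) : qPoch qv qv m ≠ 0 := by simpa using qPoch_qv_pow_ne_zero one_ne_zero m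
  have hqv2 := qPoch_qv_pow_ne_zero two_ne_zero
  rw [sum_congr rfl fun k hk => euler_type_summand_eq qv (Nat.lt_succ_iff.mp (mem_range.mp hk))
    (mul_ne_zero (hqv k) (hqv2 _)) (hqv2 n), ← sum_div, sum_qBinom_mul_prod_sub_pow, neg_pow,
    ← pow_mul, ← sq n]
end
end

section
/- Continued-fraction continuant identity for the classical q-tangent: define polynomials over Q(q) by p_0(z)=0, p_1(z)=z, q_0(z)=1, q_1(z)=a_1, and p_n(z)=a_n p_{n-1}(z) - z^2 p_{n-2}(z), q_n(z)=a_n q_{n-1}(z) - z^2 q_{n-2}(z), where a_n = [2n-1]_q q^(1-n). Then for all n ≥ 0 and all k ≤ 2n, the coefficient of z^k in p_n(z)·cos_q(z) - q_n(z)·sin_q(z) is zero, where sin_q(z) = sum (-1)^m z^(2m+1)/[2m+1]_q! and cos_q(z) = sum (-1)^m z^(2m)/[2m]_q!. -/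
/-!
The remainder `R_n = q_n sin_q - p_n cos_q` satisfies the same three-term recurrence
`R_{n+2} = a_{n+2} R_{n+1} - z² R_n` as the continuants, so it suffices to exhibit a closed form
obeying it with the right initial values `R_0 = sin_q`, `R_1 = sin_q - z cos_q`. The closed form is
`R_n = ∑_m (-1)^m q^(n(n+1)/2) z^(2m+2n+1) / ([2m+1]_q! [2m+3]_q [2m+5]_q ⋯ [2m+2n+1]_q)`,
and the recurrence for it reduces to `[2m+2n+5]_q = [2n+3]_q + q^(2n+3) [2m+2]_q`.
Since `R_n` starts at `z^(2n+1)`, its coefficients up to `z^(2n)` vanish.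
-/

noncomputable section
open Finset PowerSeries

/-- Jackson's `sin_q(z)`. -/
def jsin : PowerSeries Fq :=
  PowerSeries.mk fun m => if m % 2 = 1 then (-1 : Fq) ^ (m / 2) / qFact qv m else 0

/-- Jackson's `cos_q(z)`. -/
def jcos : PowerSeries Fq :=
  PowerSeries.mk fun m => if m % 2 = 0 then (-1 : Fq) ^ (m / 2) / qFact qv m else 0

/-- The partial quotients `a_n = [2n-1]_q q^(1-n)` of the continued fraction. -/
def a (n : ℕ) : Fq := qInt qv (2 * n - 1) * qv ^ ((1 : ℤ) - (n : ℤ))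

/-- Numerator continuants `p_n`. -/
def pp : ℕ → Polynomial Fq
  | 0 => 0
  | 1 => Polynomial.X
  | n + 2 => Polynomial.C (a (n + 2)) * pp (n + 1) - Polynomial.X ^ 2 * pp n

/-- Denominator continuants `q_n`. -/
def qq : ℕ → Polynomial Fq
  | 0 => 1
  | 1 => Polynomial.C (a 1)
  | n + 2 => Polynomial.C (a (n + 2)) * qq (n + 1) - Polynomial.X ^ 2 * qq n

theorem qv_ne_zero : qv ≠ 0 := RatFunc.X_ne_zero

theorem qInt_one (x : Fq) : qInt x 1 = 1 := by simp [qInt]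

theorem qInt_add (x : Fq) (s t : ℕ) : qInt x (s + t) = qInt x s + x ^ s * qInt x t := by
  simp only [qInt, Finset.sum_range_add, pow_add, Finset.mul_sum]

theorem qInt_ne_zero {m : ℕ} (hm : 0 < m) : qInt qv m ≠ 0 := by
  have hpoly :
      qInt qv m = algebraMap (Polynomial ℚ) Fq (∑ i ∈ range m, Polynomial.X ^ i) := by
    simp [qInt, qv, RatFunc.algebraMap_X]
  rw [hpoly]
  refine RatFunc.algebraMap_ne_zero fun h => ?_
  have := congrArg (Polynomial.eval 1) h
  simp [Polynomial.eval_finsetSum] at this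
  omega

theorem qFact_ne_zero (m : ℕ) : qFact qv m ≠ 0 :=
  prod_ne_zero_iff.2 fun _ _ => qInt_ne_zero (Nat.succ_pos _)

def qOddProd (n m : ℕ) : Fq := ∏ i ∈ range n, qInt qv (2 * m + 2 * i + 3)

theorem qOddProd_succ (n m : ℕ) :
    qOddProd (n + 1) m = qOddProd n m * qInt qv (2 * m + 2 * n + 3) :=
  prod_range_succ _ _

theorem qOddProd_succ' (n m : ℕ) :
    qOddProd (n + 1) m = qInt qv (2 * m + 3) * qOddProd n (m + 1) := by
  rw [qOddProd, prod_range_succ', mul_comm]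
  congr 1
  exact prod_congr rfl fun i _ => by ring_nf

theorem qOddProd_ne_zero (n m : ℕ) : qOddProd n m ≠ 0 :=
  prod_ne_zero_iff.2 fun _ _ => qInt_ne_zero (by omega)

/-- The coefficient of `z^(2m+2n+1)` in `q_n(z) sin_q(z) - p_n(z) cos_q(z)`. -/
def remainderCoeff (n m : ℕ) : Fq :=
  (-1) ^ m * qv ^ (n + 1).choose 2 / (qFact qv (2 * m + 1) * qOddProd n m)

theorem a_one : a 1 = 1 := by simp [a, qInt_one]

theorem a_add_two (n : ℕ) : a (n + 2) = qInt qv (2 * n + 3) / qv ^ (n + 1) := by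
  rw [a, show 2 * (n + 2) - 1 = 2 * n + 3 by omega,
    show (1 : ℤ) - ((n + 2 : ℕ) : ℤ) = -((n + 1 : ℕ) : ℤ) by push_cast; ring,
    zpow_neg, zpow_natCast, div_eq_mul_inv]

theorem remainderCoeff_zero_left (m : ℕ) :
    remainderCoeff 0 m = (-1) ^ m / qFact qv (2 * m + 1) := by
  simp [remainderCoeff, qOddProd]

theorem remainderCoeff_one_left (m : ℕ) :
    (-1) ^ (m + 1) / qFact qv (2 * m + 3) - (-1) ^ (m + 1) / qFact qv (2 * m + 2) =
      remainderCoeff 1 m := by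
  have hF2 : qFact qv (2 * m + 2) = qFact qv (2 * m + 1) * qInt qv (2 * m + 2) := qFact_succ _ _
  have hF3 : qFact qv (2 * m + 3) = qFact qv (2 * m + 2) * qInt qv (2 * m + 3) := qFact_succ _ _
  have hq : qInt qv (2 * m + 3) = 1 + qv * qInt qv (2 * m + 2) := by
    rw [show 2 * m + 3 = 1 + (2 * m + 2) by ring, qInt_add, qInt_one, pow_one]
  have := qInt_ne_zero (m := 2 * m + 2) (by omega)
  have := qInt_ne_zero (m := 2 * m + 3) (by omega)
  have := qFact_ne_zero (2 * m + 1)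
  simp only [remainderCoeff, qOddProd, range_one, prod_singleton, Nat.choose_self, pow_one]
  rw [hF3, hF2]
  generalize qInt qv (2 * m + 2) = A at *
  generalize qInt qv (2 * m + 3) = B at *
  generalize qFact qv (2 * m + 1) = F at *
  field_simp
  rw [hq]
  ring

theorem a_mul_remainderCoeff_zero (n : ℕ) :
    a (n + 2) * remainderCoeff (n + 1) 0 = remainderCoeff n 0 := by
  have := qInt_ne_zero (m := 2 * n + 3) (by omega)
  have := qOddProd_ne_zero n 0
  have := qFact_ne_zero 1
  have := qv_ne_zero
  rw [a_add_two, remainderCoeff, remainderCoeff, qOddProd_succ,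
    Nat.choose_succ_succ (n + 1) 1, Nat.choose_one_right, pow_add]
  simp only [mul_zero, zero_add]
  generalize qInt qv (2 * n + 3) = B at *
  field_simp
  ring

theorem a_mul_remainderCoeff_sub (n m : ℕ) :
    a (n + 2) * remainderCoeff (n + 1) (m + 1) - remainderCoeff n (m + 1) =
      remainderCoeff (n + 2) m := by
  have hF : qFact qv (2 * (m + 1) + 1) =
      qFact qv (2 * m + 1) * qInt qv (2 * m + 2) * qInt qv (2 * m + 3) := by
    rw [qFact_succ, show 2 * (m + 1) = 2 * m + 1 + 1 by ring, qFact_succ]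
  have hP : qOddProd (n + 2) m = qInt qv (2 * m + 3) * qOddProd (n + 1) (m + 1) :=
    qOddProd_succ' _ _
  have hq : qInt qv (2 * (m + 1) + 2 * n + 3) =
      qInt qv (2 * n + 3) + qv ^ (2 * n + 3) * qInt qv (2 * m + 2) := by
    rw [← qInt_add]; ring_nf
  have hchoose : (n + 3).choose 2 = (n + 1).choose 2 + (2 * n + 3) := by
    simp [Nat.choose_succ_succ]; ring
  have := qInt_ne_zero (m := 2 * m + 2) (by omega)
  have := qInt_ne_zero (m := 2 * m + 3) (by omega)
  have := qInt_ne_zero (m := 2 * (m + 1) + 2 * n + 3) (by omega)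
  have := qFact_ne_zero (2 * m + 1)
  have := qOddProd_ne_zero n (m + 1)
  have := qv_ne_zero
  rw [a_add_two, remainderCoeff, remainderCoeff, remainderCoeff, hF, hP, qOddProd_succ, hchoose,
    Nat.choose_succ_succ (n + 1) 1, Nat.choose_one_right, pow_add, pow_add]
  generalize qInt qv (2 * (m + 1) + 2 * n + 3) = D at *
  generalize qInt qv (2 * n + 3) = B at *
  generalize qInt qv (2 * m + 2) = A at *
  generalize qInt qv (2 * m + 3) = C at *
  field_simp
  rw [hq]
  ring

theorem coeff_jsin_odd (m : ℕ) : coeff (2 * m + 1) jsin = (-1) ^ m / qFact qv (2 * m + 1) := by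
  rw [jsin, coeff_mk, if_pos (by omega), show (2 * m + 1) / 2 = m by omega]

theorem coeff_jsin_even (m : ℕ) : coeff (2 * m) jsin = 0 := by
  simp [jsin]

theorem coeff_jcos_even (m : ℕ) : coeff (2 * m) jcos = (-1) ^ m / qFact qv (2 * m) := by
  simp [jcos]

theorem coeff_jcos_odd (m : ℕ) : coeff (2 * m + 1) jcos = 0 := by
  simp [jcos]

def remainderSeries (n : ℕ) : PowerSeries Fq :=
  mk fun k => if k % 2 = 1 ∧ 2 * n + 1 ≤ k then remainderCoeff n ((k - (2 * n + 1)) / 2) else 0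

theorem coeff_remainderSeries_of_lt {n k : ℕ} (hk : k < 2 * n + 1) :
    coeff k (remainderSeries n) = 0 := by
  rw [remainderSeries, coeff_mk, if_neg (by omega)]

theorem coeff_remainderSeries_of_even {n k : ℕ} (hk : k % 2 = 0) :
    coeff k (remainderSeries n) = 0 := by
  rw [remainderSeries, coeff_mk, if_neg (by omega)]

theorem coeff_remainderSeries {n k : ℕ} (m : ℕ) (hk : k = 2 * m + 2 * n + 1) :
    coeff k (remainderSeries n) = remainderCoeff n m := by
  rw [remainderSeries, coeff_mk, if_pos (by omega)]
  congr 1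
  omega

theorem remainderSeries_zero : remainderSeries 0 = jsin := by
  ext k
  obtain ⟨m, rfl | rfl⟩ := Nat.even_or_odd' k
  · rw [coeff_remainderSeries_of_even (by omega), coeff_jsin_even]
  · rw [coeff_remainderSeries m (by ring), remainderCoeff_zero_left, coeff_jsin_odd]

theorem remainderSeries_one : remainderSeries 1 = jsin - X * jcos := by
  ext k
  rw [map_sub]
  obtain ⟨j, rfl | rfl⟩ := Nat.even_or_odd' k
  · rw [coeff_remainderSeries_of_even (by omega)]
    rcases j with _ | i
    · simpa using (coeff_jsin_even 0).symm
    · rw [show 2 * (i + 1) = 2 * i + 1 + 1 by ring, coeff_succ_X_mul, coeff_jcos_odd,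
        show 2 * i + 1 + 1 = 2 * (i + 1) by ring, coeff_jsin_even, sub_zero]
  · rcases j with _ | m
    · simp [coeff_remainderSeries_of_lt, coeff_jsin_odd 0, coeff_jcos_even 0, qFact, qInt]
    · rw [coeff_remainderSeries m (by ring), ← remainderCoeff_one_left, coeff_jsin_odd,
        coeff_succ_X_mul, coeff_jcos_even]
      ring_nf

theorem remainderSeries_add_two (n : ℕ) :
    remainderSeries (n + 2) =
      C (a (n + 2)) * remainderSeries (n + 1) - X ^ 2 * remainderSeries n := by
  ext k
  rw [map_sub, coeff_C_mul, coeff_X_pow_mul']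
  obtain ⟨j, rfl | rfl⟩ := Nat.even_or_odd' k
  · simp only [coeff_remainderSeries_of_even (show 2 * j % 2 = 0 by omega),
      coeff_remainderSeries_of_even (show (2 * j - 2) % 2 = 0 by omega), mul_zero, ite_self,
      sub_zero]
  · obtain hj | rfl | hj := lt_trichotomy j (n + 1)
    · rw [coeff_remainderSeries_of_lt (by omega), coeff_remainderSeries_of_lt (by omega)]
      split_ifs
      · rw [coeff_remainderSeries_of_lt (by omega), mul_zero, sub_zero]
      · rw [mul_zero, sub_zero]
    · rw [coeff_remainderSeries_of_lt (by omega), coeff_remainderSeries 0 (by ring),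
        if_pos (by omega), coeff_remainderSeries 0 (by omega), a_mul_remainderCoeff_zero, sub_self]
    · obtain ⟨m, rfl⟩ := Nat.exists_eq_add_of_lt hj
      rw [coeff_remainderSeries m (by ring), coeff_remainderSeries (m + 1) (by ring),
        if_pos (by omega), coeff_remainderSeries (m + 1) (by omega), a_mul_remainderCoeff_sub]

theorem qq_mul_jsin_sub_pp_mul_jcos :
    ∀ n, (qq n : PowerSeries Fq) * jsin - (pp n : PowerSeries Fq) * jcos = remainderSeries n
  | 0 => by simp [qq, pp, remainderSeries_zero]
  | 1 => by simp [qq, pp, a_one, remainderSeries_one]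
  | n + 2 => by
    rw [remainderSeries_add_two, ← qq_mul_jsin_sub_pp_mul_jcos n,
      ← qq_mul_jsin_sub_pp_mul_jcos (n + 1), qq, pp]
    push_cast
    ring

theorem continuant_approximation (n : ℕ) (k : ℕ) (hk : k ≤ 2 * n) :
    PowerSeries.coeff k
      ((pp n : PowerSeries Fq) * jcos - (qq n : PowerSeries Fq) * jsin) = 0 := by
  rw [← neg_sub, map_neg, qq_mul_jsin_sub_pp_mul_jcos, coeff_remainderSeries_of_lt (by omega),
    neg_zero]
end
end
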